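/- arXiv:cond-mat/9710169 — 3 statements merged into one kernel-verified Lean document; each statement's English description precedes it below -/
import Mathlib

section
/- Let V : ℝ → ℝ be a C² function that is periodic with period l > 0, and let E > sup V. Let q : ℝ → ℝ be a solution of Newton's equation q̈(t) = -V'(q(t)) with energy E, i.e. ½ q̇(t)² + V(q(t)) = E for all t. Then the asymptotic velocity lim_{t→∞} q(t)/t exists and equals sign(q̇(0)) · l / (∫₀^l (2(E - V(s)))^{-1/2} ds). -/
/-!
Since `E > sup V`, the velocity never vanishes, so it keeps the sign `σ` of `q̇ 0` and
`q̇ = σ √(2(E - V ∘ q))`. With `g = (2(E - V))^{-1/2}` and `F x = ∫₀^x g`, this says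
`F (q t) = F (q 0) + σ t`. Since `g` is `l`-periodic, `F x` stays within bounded distance
of `(T / l) x`, `T = ∫₀^l g`, hence `q t = σ (l / T) t + O(1)`.
-/

open Filter MeasureTheory Topology

theorem Continuous.sign_eq_of_forall_ne_zero {p : ℝ → ℝ} (hp : Continuous p)
    (h : ∀ t, p t ≠ 0) (s t : ℝ) : Real.sign (p s) = Real.sign (p t) := by
  have no_sign_change : ∀ a b, p a < 0 → 0 < p b → False := fun a b ha hb => by
    obtain ⟨c, hc⟩ := intermediate_value_univ a b hp ⟨ha.le, hb.le⟩
    exact h c hc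
  rcases (h s).lt_or_gt with hs | hs <;> rcases (h t).lt_or_gt with ht | ht
  · rw [Real.sign_of_neg hs, Real.sign_of_neg ht]
  · exact (no_sign_change s t hs ht).elim
  · exact (no_sign_change t s ht hs).elim
  · rw [Real.sign_of_pos hs, Real.sign_of_pos ht]

theorem Real.inv_sqrt_sq_mul_self {x : ℝ} (hx : x ≠ 0) : (√(x ^ 2))⁻¹ * x = Real.sign x := by
  rw [Real.sqrt_sq_eq_abs]
  rcases hx.lt_or_gt with hx | hx
  · rw [abs_of_neg hx, Real.sign_of_neg hx, inv_neg, neg_mul, inv_mul_cancel₀ hx.ne]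
  · rw [abs_of_pos hx, Real.sign_of_pos hx, inv_mul_cancel₀ hx.ne']

namespace Function.Periodic

variable {g : ℝ → ℝ} {l : ℝ}

theorem periodic_primitive_sub_mul (hg : Periodic g l) (hl : l ≠ 0)
    (hint : ∀ a b, IntervalIntegrable g volume a b) :
    Periodic (fun x => (∫ s in 0..x, g s) - (∫ s in 0..l, g s) / l * x) l := fun x => by
  simp only [hg.intervalIntegral_add_eq_add 0 x hint, zero_add]
  field_simp
  ring

theorem exists_abs_primitive_sub_mul_le (hg : Periodic g l) (hl : l ≠ 0)
    (hcont : Continuous g) :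
    ∃ M, ∀ x, |(∫ s in 0..x, g s) - (∫ s in 0..l, g s) / l * x| ≤ M := by
  have hint : ∀ a b, IntervalIntegrable g volume a b := hcont.intervalIntegrable
  have hbdd := (hg.periodic_primitive_sub_mul hl hint).isBounded_of_continuous hl
    ((intervalIntegral.continuous_primitive hint 0).sub (continuous_const.mul continuous_id))
  obtain ⟨M, hM⟩ := isBounded_iff_forall_norm_le.mp hbdd
  exact ⟨M, fun x => hM _ ⟨x, rfl⟩⟩

end Function.Periodic

theorem tendsto_div_atTop_of_abs_sub_mul_le {F q : ℝ → ℝ} {a c v M : ℝ} (hc : c ≠ 0)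
    (hF : ∀ x, |F x - c * x| ≤ M) (hFq : ∀ t, F (q t) = a + v * t) :
    Tendsto (fun t => q t / t) atTop (𝓝 (v / c)) := by
  have hdev : ∀ t, |c * q t - v * t| ≤ |a| + M := fun t => by
    have := hF (q t)
    rw [hFq] at this
    calc |c * q t - v * t| = |a - (a + v * t - c * q t)| := by congr 1; ring
      _ ≤ |a| + |a + v * t - c * q t| := abs_sub _ _
      _ ≤ |a| + M := by gcongr
  have hdecay : Tendsto (fun t => t⁻¹ * ((c * q t - v * t) / c)) atTop (𝓝 0) := by
    refine tendsto_inv_atTop_zero.zero_mul_isBoundedUnder_le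
      (isBoundedUnder_of ⟨(|a| + M) / |c|, fun t => ?_⟩)
    simp only [Function.comp_apply, Real.norm_eq_abs, abs_div]
    gcongr
    exact hdev t
  refine (hdecay.add_const (v / c)).congr' ?_ |>.trans (by rw [zero_add])
  filter_upwards [eventually_ne_atTop 0] with t ht
  field_simp
  ring

theorem intervalIntegral_eq_mul_of_mul_deriv_eq_const {q g : ℝ → ℝ} {σ : ℝ}
    (hq : ContDiff ℝ 1 q) (hg : Continuous g) (h : ∀ t, g (q t) * deriv q t = σ) (t : ℝ) :
    ∫ s in q 0..q t, g s = σ * t := by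
  rw [← intervalIntegral.integral_comp_mul_deriv
    (fun x _ => (hq.differentiable one_ne_zero x).hasDerivAt)
    (hq.continuous_deriv le_rfl).continuousOn hg]
  simp [h, mul_comm]

theorem ballistic_dim_one_general (V : ℝ → ℝ) (hV : ContDiff ℝ 2 V)
    (l : ℝ) (hl : 0 < l) (hper : ∀ x, V (x + l) = V x)
    (E : ℝ) (hE : (⨆ x, V x) < E)
    (q : ℝ → ℝ) (hq : ContDiff ℝ 2 q)
    (henergy : ∀ t, (deriv q t) ^ 2 / 2 + V (q t) = E) :
    Tendsto (fun t => q t / t) atTop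
      (nhds (Real.sign (deriv q 0) * l /
        ∫ s in (0:ℝ)..l, (Real.sqrt (2 * (E - V s)))⁻¹)) := by
  have hVper : Function.Periodic V l := hper
  have hkinetic : ∀ x, 0 < 2 * (E - V x) := fun x => by
    linarith [le_ciSup (hVper.isBounded_of_continuous hl.ne' hV.continuous).bddAbove x]
  set g : ℝ → ℝ := fun x => (√(2 * (E - V x)))⁻¹
  have hg : Continuous g :=
    ((continuous_const.mul (continuous_const.sub hV.continuous)).sqrt).inv₀
      fun x => (Real.sqrt_pos.mpr (hkinetic x)).ne'
  have hgper : Function.Periodic g l := fun x => by simp only [g, hper]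
  set T := ∫ s in 0..l, g s
  have hT : 0 < T := intervalIntegral.intervalIntegral_pos_of_pos (hg.intervalIntegrable _ _)
    (fun x => inv_pos.mpr (Real.sqrt_pos.mpr (hkinetic x))) hl
  have hspeed : ∀ t, deriv q t ^ 2 = 2 * (E - V (q t)) := fun t => by linarith [henergy t]
  have hmoving : ∀ t, deriv q t ≠ 0 := fun t h0 => by
    have := hkinetic (q t)
    rw [← hspeed t, h0] at this
    norm_num at this
  have hq1 : ContDiff ℝ 1 q := hq.of_le one_le_two
  have hrate : ∀ t, g (q t) * deriv q t = Real.sign (deriv q 0) := fun t => by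
    rw [← (hq1.continuous_deriv le_rfl).sign_eq_of_forall_ne_zero hmoving t 0,
      ← Real.inv_sqrt_sq_mul_self (hmoving t), hspeed t]
  obtain ⟨M, hM⟩ := hgper.exists_abs_primitive_sub_mul_le hl.ne' hg
  have hFq : ∀ t, ∫ s in 0..q t, g s = (∫ s in 0..q 0, g s) + Real.sign (deriv q 0) * t :=
    fun t => by
      rw [← intervalIntegral_eq_mul_of_mul_deriv_eq_const hq1 hg hrate t,
        intervalIntegral.integral_add_adjacent_intervals (hg.intervalIntegrable _ _)
          (hg.intervalIntegrable _ _)]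
  convert tendsto_div_atTop_of_abs_sub_mul_le (div_pos hT hl).ne' hM hFq using 2
  field_simp

/-- One-dimensional motion in a periodic potential above the
maximum of the potential is ballistic, with asymptotic velocity
`sign(q̇(0)) · l / ∫₀^l (2(E - V(s)))^{-1/2} ds`. -/
theorem ballistic_dim_one (V : ℝ → ℝ) (hV : ContDiff ℝ 2 V)
    (l : ℝ) (hl : 0 < l) (hper : ∀ x, V (x + l) = V x)
    (E : ℝ) (hE : (⨆ x, V x) < E)
    (q : ℝ → ℝ) (hq : ContDiff ℝ 2 q)
    (hnewton : ∀ t, deriv (deriv q) t = - deriv V (q t))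
    (henergy : ∀ t, (deriv q t) ^ 2 / 2 + V (q t) = E) :
    Tendsto (fun t => q t / t) atTop
      (nhds (Real.sign (deriv q 0) * l /
        ∫ s in (0:ℝ)..l, (Real.sqrt (2 * (E - V s)))⁻¹)) :=
  ballistic_dim_one_general V hV l hl hper E hE q hq henergy
end

section
/- Let V : ℝ → ℝ be a C² function that is periodic with period l > 0, and let E ≤ sup V. Then every solution q : ℝ → ℝ of Newton's equation q̈(t) = -V'(q(t)) with energy E satisfies lim_{t→∞} q(t)/t = 0. In other words, in one dimension the motion is ballistic at a point of phase space if and only if its energy exceeds sup V. -/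
/-!
Let `m` be a maximum point of `V`. Since `V'` is Lipschitz, Glaeser's inequality gives
`V'² ≤ 2K (V m - V)`, and energy `E ≤ V m` gives `q̇² ≤ 2 (V m - V ∘ q)`. Hence the gap
`h = V m - V ∘ q` satisfies `|ḣ| ≤ 2 √K h`, so by Grönwall either `h ≡ 0` and `q` is at
rest, or `h` never vanishes and `q` can never cross a translate `m + k l` of the maximum
point. Either way `q` is bounded, so `q t / t → 0`.
-/

open Filter Set
open scoped NNReal Topology

theorem Function.Periodic.deriv {f : ℝ → ℝ} {c : ℝ} (hf : Function.Periodic f c) :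
    Function.Periodic (deriv f) c := fun x => by
  rw [← deriv_comp_add_const, hf.funext]

theorem Function.Periodic.exists_forall_ge_of_continuous {f : ℝ → ℝ} {c : ℝ}
    (hf : Function.Periodic f c) (hc : c ≠ 0) (hfc : Continuous f) :
    ∃ m, ∀ x, f x ≤ f m := by
  obtain ⟨_, ⟨m, rfl⟩, hm⟩ :=
    (hf.compact_of_continuous hc hfc).exists_isGreatest (range_nonempty f)
  exact ⟨m, fun x => hm ⟨x, rfl⟩⟩

theorem exists_pos_lipschitzWith_deriv_of_periodic {f : ℝ → ℝ} {c : ℝ}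
    (hf2 : ContDiff ℝ 2 f) (hf : Function.Periodic f c) (hc : c ≠ 0) :
    ∃ K : ℝ≥0, 0 < K ∧ LipschitzWith K (deriv f) := by
  obtain ⟨C, hC⟩ := isBounded_iff_forall_norm_le.mp <|
    hf.deriv.deriv.isBounded_of_continuous hc (hf2.iterate_deriv' 0 2).continuous
  refine ⟨C.toNNReal + 1, by positivity, lipschitzWith_of_nnnorm_deriv_le
    ((hf2.iterate_deriv' 1 1).differentiable one_ne_zero) fun x => ?_⟩
  have hx := hC _ ⟨x, rfl⟩
  rw [← NNReal.coe_le_coe, coe_nnnorm]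
  push_cast
  linarith [Real.le_coe_toNNReal C]

/-- Glaeser's inequality. -/
theorem sq_deriv_le_of_lipschitzWith_deriv {f : ℝ → ℝ} {K : ℝ≥0} {M : ℝ}
    (hf : Differentiable ℝ f) (hK : 0 < K) (hf' : LipschitzWith K (deriv f))
    (hM : ∀ y, f y ≤ M) (x : ℝ) :
    deriv f x ^ 2 ≤ 2 * K * (M - f x) := by
  set D := deriv f x
  -- `g` is convex with a critical point at `x`, so it is minimal there.
  set g : ℝ → ℝ := fun y => f y - D * y + K / 2 * (y - x) ^ 2
  have hg : ∀ y, HasDerivAt g (deriv f y - D + K * (y - x)) y := fun y => by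
    refine (((hf y).hasDerivAt.sub ((hasDerivAt_id y).const_mul D)).add
      (((hasDerivAt_id y).sub_const x).pow 2 |>.const_mul (K / 2 : ℝ))).congr_deriv ?_
    simp only [id, Nat.cast_ofNat]; ring
  have hmono : Monotone (deriv g) := fun a b hab => by
    have hlip : dist (deriv f b) (deriv f a) ≤ K * dist b a := hf'.dist_le_mul b a
    rw [Real.dist_eq, Real.dist_eq, abs_of_nonneg (sub_nonneg.mpr hab)] at hlip
    rw [(hg a).deriv, (hg b).deriv]
    linarith [neg_abs_le (deriv f b - deriv f a)]
  have hmin : IsMinOn g univ x :=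
    (hmono.convexOn_univ_of_deriv fun y => (hg y).differentiableAt).isMinOn_of_rightDeriv_eq_zero
      (by simp) (by rw [(hg x).hasDerivWithinAt.derivWithin (uniqueDiffWithinAt_Ioi x)]; simp [D])
  have hKpos : (0 : ℝ) < K := hK
  have hgx : g x = f x - D * x := by simp [g]
  have hgy : g (x + D / K) = f (x + D / K) - D * x - D ^ 2 / (2 * K) := by
    simp only [g]; field_simp; ring
  have hD : D ^ 2 / (2 * K) ≤ M - f x := by
    rw [isMinOn_univ_iff] at hmin
    linarith [hmin (x + D / K), hM (x + D / K)]
  rwa [div_le_iff₀ (by positivity), mul_comm] at hD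

theorem eq_zero_of_norm_deriv_le_mul_norm_of_eq_zero {E : Type*} [NormedAddCommGroup E]
    [NormedSpace ℝ E] {f f' : ℝ → E} {K t₀ : ℝ} (hf : ∀ t, HasDerivAt f (f' t) t)
    (bound : ∀ t, ‖f' t‖ ≤ K * ‖f t‖) (h₀ : f t₀ = 0) (t : ℝ) : f t = 0 := by
  rcases le_total t₀ t with ht | ht
  · exact eq_zero_of_abs_deriv_le_mul_abs_self_of_eq_zero_right
      (continuous_iff_continuousAt.mpr fun s => (hf s).continuousAt).continuousOn
      (fun s _ => (hf s).hasDerivWithinAt) h₀ (fun s _ => bound s) t ⟨ht, le_rfl⟩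
  · have hneg : ∀ s, HasDerivAt (fun s => f (-s)) (-f' (-s)) s := fun s =>
      ((hf (-s)).scomp s (hasDerivAt_neg' s)).congr_deriv (by simp)
    simpa using eq_zero_of_abs_deriv_le_mul_abs_self_of_eq_zero_right (a := -t₀) (b := -t)
      (continuous_iff_continuousAt.mpr fun s => (hneg s).continuousAt).continuousOn
      (fun s _ => (hneg s).hasDerivWithinAt) (by simpa using h₀)
      (fun s _ => by simpa using bound (-s)) (-t) ⟨neg_le_neg ht, le_rfl⟩

section

variable {X α : Type*} [TopologicalSpace X] [PreconnectedSpace X] [LinearOrder α]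
  [TopologicalSpace α] [OrderClosedTopology α] {q : X → α} {a : α} {x₀ : X}

theorem Continuous.forall_lt_of_forall_ne (hq : Continuous q) (ha : ∀ x, q x ≠ a)
    (h₀ : q x₀ < a) (x : X) : q x < a := by
  by_contra! hx
  obtain ⟨y, hy⟩ := intermediate_value_univ x₀ x hq ⟨h₀.le, hx⟩
  exact ha y hy

theorem Continuous.forall_lt_of_forall_ne' (hq : Continuous q) (ha : ∀ x, q x ≠ a)
    (h₀ : a < q x₀) (x : X) : a < q x :=
  hq.forall_lt_of_forall_ne (α := αᵒᵈ) ha h₀ x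

end

theorem tendsto_div_atTop_zero_of_abs_le {q : ℝ → ℝ} {C : ℝ} (hC : ∀ t, |q t| ≤ C) :
    Tendsto (fun t => q t / t) atTop (𝓝 0) := by
  simpa [div_eq_inv_mul] using tendsto_inv_atTop_zero.zero_mul_isBoundedUnder_le
    (g := q) (isBoundedUnder_of ⟨C, hC⟩)

theorem exists_abs_le_of_forall_lt_max {V q : ℝ → ℝ} {l m : ℝ}
    (hper : Function.Periodic V l) (hl : 0 < l) (hq : Continuous q)
    (hlt : ∀ t, V (q t) < V m) : ∃ C, ∀ t, |q t| ≤ C := by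
  have hne : ∀ (k : ℤ) t, q t ≠ m + k * l := fun k t h =>
    (hlt t).ne (by rw [h, hper.int_mul k m])
  obtain ⟨k₁, hk₁⟩ := exists_int_gt ((q 0 - m) / l)
  obtain ⟨k₂, hk₂⟩ := exists_int_lt ((q 0 - m) / l)
  rw [div_lt_iff₀ hl] at hk₁
  rw [lt_div_iff₀ hl] at hk₂
  refine ⟨max |m + k₁ * l| |m + k₂ * l|, fun t => abs_le.mpr ⟨?_, ?_⟩⟩
  · have := hq.forall_lt_of_forall_ne' (hne k₂) (by linarith) t
    linarith [neg_abs_le (m + k₂ * l), le_max_right |m + k₁ * l| |m + k₂ * l|]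
  · have := hq.forall_lt_of_forall_ne (hne k₁) (by linarith) t
    linarith [le_abs_self (m + k₁ * l), le_max_left |m + k₁ * l| |m + k₂ * l|]

theorem exists_abs_le_of_energy_le_max {V q : ℝ → ℝ} {l m : ℝ} {K : ℝ≥0}
    (hV : Differentiable ℝ V) (hper : Function.Periodic V l) (hl : 0 < l)
    (hglaeser : ∀ x, deriv V x ^ 2 ≤ 2 * K * (V m - V x)) (hq : Differentiable ℝ q)
    (hspeed : ∀ t, deriv q t ^ 2 ≤ 2 * (V m - V (q t))) : ∃ C, ∀ t, |q t| ≤ C := by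
  have hgap_nonneg : ∀ t, 0 ≤ V m - V (q t) := fun t => by
    nlinarith [hspeed t, sq_nonneg (deriv q t)]
  by_cases hmax : ∃ t₀, V (q t₀) = V m
  · obtain ⟨t₀, ht₀⟩ := hmax
    have hgap : ∀ t, HasDerivAt (fun t => V m - V (q t)) (-(deriv V (q t) * deriv q t)) t :=
      fun t => ((hV (q t)).hasDerivAt.comp t (hq t).hasDerivAt).const_sub (V m)
    have hbound : ∀ t, ‖-(deriv V (q t) * deriv q t)‖ ≤ 2 * √K * ‖V m - V (q t)‖ := by
      intro t
      rw [norm_neg, Real.norm_eq_abs, Real.norm_eq_abs, abs_of_nonneg (hgap_nonneg t)]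
      refine abs_le_of_sq_le_sq ?_ (by positivity [hgap_nonneg t])
      calc (deriv V (q t) * deriv q t) ^ 2 = deriv V (q t) ^ 2 * deriv q t ^ 2 := by ring
        _ ≤ (2 * K * (V m - V (q t))) * (2 * (V m - V (q t))) :=
          mul_le_mul (hglaeser _) (hspeed t) (sq_nonneg _) (by positivity [hgap_nonneg t])
        _ = (2 * √K * (V m - V (q t))) ^ 2 := by
          rw [mul_pow, mul_pow, Real.sq_sqrt K.coe_nonneg]; ring
    have hrest : ∀ t, V (q t) = V m := fun t => (sub_eq_zero.mp <|
      eq_zero_of_norm_deriv_le_mul_norm_of_eq_zero hgap hbound (sub_eq_zero.mpr ht₀.symm) t).symm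
    have hq' : ∀ t, deriv q t = 0 := fun t => pow_eq_zero_iff two_ne_zero |>.mp <|
      le_antisymm (by simpa [hrest t] using hspeed t) (sq_nonneg _)
    exact ⟨|q 0|, fun t => (is_const_of_deriv_eq_zero hq hq' t 0 ▸ le_rfl)⟩
  · push Not at hmax
    exact exists_abs_le_of_forall_lt_max hper hl hq.continuous fun t =>
      lt_of_le_of_ne (sub_nonneg.mp (hgap_nonneg t)) (hmax t)

theorem not_ballistic_dim_one_general (V : ℝ → ℝ) (hV : ContDiff ℝ 2 V)
    (l : ℝ) (hl : 0 < l) (hper : ∀ x, V (x + l) = V x)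
    (E : ℝ) (hE : E ≤ ⨆ x, V x)
    (q : ℝ → ℝ) (hq : ContDiff ℝ 2 q)
    (henergy : ∀ t, (deriv q t) ^ 2 / 2 + V (q t) = E) :
    Tendsto (fun t => q t / t) atTop (nhds 0) := by
  have hVper : Function.Periodic V l := hper
  have hVd : Differentiable ℝ V := hV.differentiable two_ne_zero
  obtain ⟨m, hm⟩ := hVper.exists_forall_ge_of_continuous hl.ne' hV.continuous
  obtain ⟨K, hK, hKlip⟩ := exists_pos_lipschitzWith_deriv_of_periodic hV hVper hl.ne'
  have hEm : E ≤ V m := hE.trans (ciSup_le hm)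
  obtain ⟨C, hC⟩ := exists_abs_le_of_energy_le_max hVd hVper hl
    (sq_deriv_le_of_lipschitzWith_deriv hVd hK hKlip hm) (hq.differentiable two_ne_zero)
    fun t => by linarith [henergy t]
  exact tendsto_div_atTop_zero_of_abs_le hC

/-- One-dimensional motion in a periodic potential at an
energy not exceeding the maximum of the potential is not ballistic: the
asymptotic velocity `lim_{t→∞} q(t)/t` exists and vanishes. -/
theorem not_ballistic_dim_one (V : ℝ → ℝ) (hV : ContDiff ℝ 2 V)
    (l : ℝ) (hl : 0 < l) (hper : ∀ x, V (x + l) = V x)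
    (E : ℝ) (hE : E ≤ ⨆ x, V x)
    (q : ℝ → ℝ) (hq : ContDiff ℝ 2 q)
    (hnewton : ∀ t, deriv (deriv q) t = - deriv V (q t))
    (henergy : ∀ t, (deriv q t) ^ 2 / 2 + V (q t) = E) :
    Tendsto (fun t => q t / t) atTop (nhds 0) :=
  not_ballistic_dim_one_general V hV l hl hper E hE q hq henergy
end

section
/- Let V : ℝ^d → ℝ be continuous and periodic with respect to a full-rank lattice ℒ ⊂ ℝ^d, let E ≥ sup V, and let ℓ ∈ ℒ. Then there exists q₀ ∈ ℝ^d such that ∫₀¹ √(E - V(q₀ + τℓ)) dτ ≤ √(E - V̄), where V̄ is the mean value of V over a fundamental domain of ℒ. -/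
/-!
Averaging the line mean `∫₀¹ V(q + τℓ) dτ` over `q` in a fundamental domain gives `V̄`, by Fubini
and because a periodic function has the same integral over every translate of a fundamental
domain. Hence some base point `q₀` has line mean at least `V̄`, and Jensen's inequality for the
concave square root gives `∫₀¹ √(E - V(q₀ + τℓ)) dτ ≤ √(E - ∫₀¹ V(q₀ + τℓ) dτ) ≤ √(E - V̄)`.
-/

open MeasureTheory Pointwise Set

theorem integral_sqrt_le_sqrt_integral {α : Type*} [MeasurableSpace α] {μ : Measure α}
    [IsProbabilityMeasure μ] {f : α → ℝ} (hf₀ : 0 ≤ᵐ[μ] f) (hf : Integrable f μ) :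
    ∫ x, √(f x) ∂μ ≤ √(∫ x, f x ∂μ) := by
  have hsqrt : Integrable (fun x => √(f x)) μ := by
    refine (hf.add (integrable_const 1)).mono'
      (Real.continuous_sqrt.comp_aestronglyMeasurable hf.aestronglyMeasurable) ?_
    filter_upwards [hf₀] with x hx
    rw [Real.norm_of_nonneg (Real.sqrt_nonneg _), Pi.add_apply]
    nlinarith [Real.sq_sqrt hx, Real.sqrt_nonneg (f x)]
  exact Real.strictConcaveOn_sqrt.concaveOn.le_map_integral Real.continuous_sqrt.continuousOn
    isClosed_Ici hf₀ hf hsqrt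

theorem intervalIntegral_sqrt_sub_le {g : ℝ → ℝ} (hg : Continuous g) {E : ℝ}
    (hgE : ∀ τ ∈ Icc (0:ℝ) 1, g τ ≤ E) :
    ∫ τ in (0:ℝ)..1, √(E - g τ) ≤ √(E - ∫ τ in (0:ℝ)..1, g τ) := by
  have : IsProbabilityMeasure (volume.restrict (Ioc (0:ℝ) 1)) := ⟨by simp⟩
  have hnonneg : 0 ≤ᵐ[volume.restrict (Ioc (0:ℝ) 1)] fun τ => E - g τ :=
    (ae_restrict_iff' measurableSet_Ioc).2 <| ae_of_all _ fun τ hτ =>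
      sub_nonneg.2 (hgE τ (Ioc_subset_Icc_self hτ))
  have hsub : ∫ τ in (0:ℝ)..1, (E - g τ) = E - ∫ τ in (0:ℝ)..1, g τ := by
    simp [intervalIntegral.integral_sub intervalIntegrable_const (hg.intervalIntegrable 0 1)]
  rw [← hsub]
  simp only [intervalIntegral.integral_of_le zero_le_one]
  exact integral_sqrt_le_sqrt_integral hnonneg (by fun_prop : Continuous _).integrableOn_Ioc

theorem ZSpan.isCompact_range_of_periodic {E ι β : Type*} [NormedAddCommGroup E]
    [NormedSpace ℝ E] [Fintype ι] [TopologicalSpace β] (b : Module.Basis ι ℝ E) {V : E → β}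
    (hVc : Continuous V) (hper : ∀ ℓ ∈ Submodule.span ℤ (range b), ∀ x, V (x + ℓ) = V x) :
    IsCompact (range V) := by
  have : FiniteDimensional ℝ E := b.finiteDimensional_of_finite
  have hrange : range V = V '' closure (fundamentalDomain b) := by
    refine Subset.antisymm ?_ (image_subset_range _ _)
    rintro _ ⟨x, rfl⟩
    refine ⟨fract b x, subset_closure (fract_mem_fundamentalDomain b x), ?_⟩
    rw [← hper _ (floor b x).2, fract_apply, sub_add_cancel]
  rw [hrange]
  exact (fundamentalDomain_isBounded b).isCompact_closure.image hVc

namespace MeasureTheory.IsAddFundamentalDomain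

variable {X : Type*} [AddCommGroup X] [MeasurableSpace X] [MeasurableAdd X] {μ : Measure X}
  [μ.IsAddLeftInvariant] {L : AddSubgroup X} [Countable L] {s : Set X}
  {V : X → ℝ}

theorem setIntegral_add_right_of_periodic
    (hs : IsAddFundamentalDomain L s μ) (hV : ∀ ℓ ∈ L, ∀ x, V (x + ℓ) = V x) (v : X) :
    ∫ x in s, V (x + v) ∂μ = ∫ x in s, V x ∂μ := by
  calc ∫ x in s, V (x + v) ∂μ = ∫ x in v +ᵥ s, V x ∂μ := by
        simp_rw [add_comm _ v]
        exact ((measurePreserving_vadd v μ).setIntegral_image_emb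
          (measurableEmbedding_const_vadd v) V s).symm
    _ = ∫ x in s, V x ∂μ := (hs.vadd_of_comm v).setIntegral_eq hs fun ℓ x => by
        rw [AddSubgroup.vadd_def, vadd_eq_add, add_comm]
        exact hV ℓ ℓ.2 x

theorem setIntegral_intervalIntegral_add_smul_of_periodic
    [TopologicalSpace X] [IsTopologicalAddGroup X] [SecondCountableTopology X] [BorelSpace X]
    [Module ℝ X] [ContinuousSMul ℝ X] (hs : IsAddFundamentalDomain L s μ) (hμs : μ s ≠ ⊤)
    (hV : ∀ ℓ ∈ L, ∀ x, V (x + ℓ) = V x) (hVc : Continuous V) {C : ℝ} (hC : ∀ x, ‖V x‖ ≤ C)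
    (ℓ : X) :
    ∫ q in s, (∫ τ in (0:ℝ)..1, V (q + τ • ℓ)) ∂μ = ∫ q in s, V q ∂μ := by
  have : IsFiniteMeasure (μ.restrict s) := isFiniteMeasure_restrict.mpr hμs
  have hcont : Continuous (Function.uncurry fun q (τ : ℝ) => V (q + τ • ℓ)) := by fun_prop
  have hint : Integrable (Function.uncurry fun q (τ : ℝ) => V (q + τ • ℓ))
      ((μ.restrict s).prod (volume.restrict (Ioc (0:ℝ) 1))) :=
    .of_bound hcont.aestronglyMeasurable C (ae_of_all _ fun _ => hC _)
  calc ∫ q in s, (∫ τ in (0:ℝ)..1, V (q + τ • ℓ)) ∂μ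
      = ∫ q in s, (∫ τ in Ioc (0:ℝ) 1, V (q + τ • ℓ)) ∂μ := by
        simp_rw [intervalIntegral.integral_of_le zero_le_one]
    _ = ∫ τ in Ioc (0:ℝ) 1, ∫ q in s, V (q + τ • ℓ) ∂μ := integral_integral_swap hint
    _ = ∫ q in s, V q ∂μ := by
        simp [hs.setIntegral_add_right_of_periodic hV]

end MeasureTheory.IsAddFundamentalDomain

theorem ZSpan.exists_setAverage_le_intervalIntegral_add_smul {E ι : Type*}
    [NormedAddCommGroup E] [NormedSpace ℝ E] [MeasurableSpace E] [BorelSpace E] [Fintype ι]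
    (b : Module.Basis ι ℝ E) (μ : Measure E) [μ.IsAddHaarMeasure] {V : E → ℝ}
    (hVc : Continuous V) (hper : ∀ ℓ ∈ Submodule.span ℤ (range b), ∀ x, V (x + ℓ) = V x)
    (ℓ : E) :
    ∃ q₀, ⨍ x in fundamentalDomain b, V x ∂μ ≤ ∫ τ in (0:ℝ)..1, V (q₀ + τ • ℓ) := by
  have : FiniteDimensional ℝ E := b.finiteDimensional_of_finite
  have : Countable (Submodule.span ℤ (range b)).toAddSubgroup :=
    inferInstanceAs (Countable (Submodule.span ℤ (range b)))
  have hbdd := fundamentalDomain_isBounded b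
  obtain ⟨C, hC⟩ :=
    isBounded_iff_forall_norm_le.mp (isCompact_range_of_periodic b hVc hper).isBounded
  have hWc : Continuous fun q => ∫ τ in (0:ℝ)..1, V (q + τ • ℓ) :=
    intervalIntegral.continuous_parametric_intervalIntegral_of_continuous' (by fun_prop) 0 1
  have hmean : ⨍ q in fundamentalDomain b, (∫ τ in (0:ℝ)..1, V (q + τ • ℓ)) ∂μ =
      ⨍ x in fundamentalDomain b, V x ∂μ := by
    simp only [setAverage_eq, (ZSpan.isAddFundamentalDomain' b μ)
      |>.setIntegral_intervalIntegral_add_smul_of_periodic hbdd.measure_lt_top.ne hper hVc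
        (fun x => hC _ (mem_range_self x))]
  obtain ⟨q₀, -, hq₀⟩ := exists_setAverage_le (measure_fundamentalDomain_ne_zero b)
    hbdd.measure_lt_top.ne <|
      ((hWc.locallyIntegrable (μ := μ)).integrableOn_isCompact hbdd.isCompact_closure).mono_set
        subset_closure
  exact ⟨q₀, hmean ▸ hq₀⟩

theorem exists_short_straight_line_general (d : ℕ)
    (b : Module.Basis (Fin d) ℝ (EuclideanSpace ℝ (Fin d)))
    (V : EuclideanSpace ℝ (Fin d) → ℝ) (hVc : Continuous V)
    (hper : ∀ ℓ ∈ Submodule.span ℤ (Set.range b), ∀ x, V (x + ℓ) = V x)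
    (E : ℝ) (hE : (⨆ x, V x) ≤ E)
    (ℓ : EuclideanSpace ℝ (Fin d)) :
    ∃ q₀ : EuclideanSpace ℝ (Fin d),
      (∫ τ in (0:ℝ)..1, Real.sqrt (E - V (q₀ + τ • ℓ)))
        ≤ Real.sqrt (E - (∫ x in ZSpan.fundamentalDomain b, V x) /
            (volume (ZSpan.fundamentalDomain b)).toReal) := by
  obtain ⟨q₀, hq₀⟩ := ZSpan.exists_setAverage_le_intervalIntegral_add_smul b volume hVc hper ℓ
  rw [setAverage_eq, measureReal_def, smul_eq_mul, ← div_eq_inv_mul] at hq₀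
  have hVE : ∀ x, V x ≤ E := fun x =>
    (le_ciSup (ZSpan.isCompact_range_of_periodic b hVc hper).bddAbove x).trans hE
  refine ⟨q₀, (intervalIntegral_sqrt_sub_le (by fun_prop) fun τ _ => hVE _).trans ?_⟩
  exact Real.sqrt_le_sqrt (by linarith)

/-- For a continuous lattice-periodic potential, `E ≥ sup V`
and a lattice vector `ℓ`, there is a base point `q₀` for which the Jacobi length
weight `∫₀¹ √(E - V(q₀ + τℓ)) dτ` of the straight closed line in direction `ℓ`
is at most `√(E - V̄)`, where `V̄` is the mean of `V` over a fundamental domain. -/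
theorem exists_short_straight_line (d : ℕ)
    (b : Module.Basis (Fin d) ℝ (EuclideanSpace ℝ (Fin d)))
    (V : EuclideanSpace ℝ (Fin d) → ℝ) (hVc : Continuous V)
    (hper : ∀ ℓ ∈ Submodule.span ℤ (Set.range b), ∀ x, V (x + ℓ) = V x)
    (E : ℝ) (hE : (⨆ x, V x) ≤ E)
    (ℓ : EuclideanSpace ℝ (Fin d)) (hℓ : ℓ ∈ Submodule.span ℤ (Set.range b)) :
    ∃ q₀ : EuclideanSpace ℝ (Fin d),
      (∫ τ in (0:ℝ)..1, Real.sqrt (E - V (q₀ + τ • ℓ)))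
        ≤ Real.sqrt (E - (∫ x in ZSpan.fundamentalDomain b, V x) /
            (volume (ZSpan.fundamentalDomain b)).toReal) :=
  exists_short_straight_line_general d b V hVc hper E hE ℓ
end
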